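/- arXiv:1111.6233 — 3 statements merged into one kernel-verified Lean document; each statement's English description precedes it below -/
import Mathlib

section
/- Let Z be a centered second-order random process indexed by ℝ² with covariance kernel K(x,y) = K₁(x₁,y₁) + K₂(x₂,y₂). Define Z_T(x₁,x₂) = Z(x₁,0) + Z(0,x₂) − Z(0,0). Then for every x ∈ ℝ², Var[Z(x) − Z_T(x)] = 0, hence P(Z(x) = Z_T(x)) = 1; i.e., Z admits a modification whose paths are additive functions. -/
/-!
With `D = Z(x) − Z(x₁,0) − Z(0,x₂) + Z(0,0)`, additivity of the kernel makes
`E[D Z(y)] = K(x,y) − K((x₁,0),y) − K((0,x₂),y) + K((0,0),y)` vanish for every `y`: the `K₁`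
terms cancel in the pairs sharing `x₁` and the `K₂` terms in the pairs sharing `x₂`. Since `D`
is itself a combination of values of `Z`, it is orthogonal to itself in `L²`, so `D = 0` a.s.
-/

open MeasureTheory

namespace MeasureTheory

variable {Ω : Type*} [MeasurableSpace Ω] {μ : Measure Ω}

lemma integral_sq_sum_eq_zero_of_forall_sum_integral_mul_eq_zero {ι : Type*} [Fintype ι]
    {X : ι → Ω → ℝ} (hX : ∀ i, MemLp (X i) 2 μ) (c : ι → ℝ)
    (horth : ∀ j, ∑ i, c i * ∫ ω, X i ω * X j ω ∂μ = 0) :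
    ∫ ω, (∑ i, c i * X i ω) ^ 2 ∂μ = 0 := by
  have hint : ∀ i j, Integrable (fun ω ↦ c j * (c i * (X i ω * X j ω))) μ := fun i j ↦
    (((hX i).integrable_mul (hX j)).const_mul (c i)).const_mul (c j)
  calc ∫ ω, (∑ i, c i * X i ω) ^ 2 ∂μ
      = ∫ ω, ∑ j, ∑ i, c j * (c i * (X i ω * X j ω)) ∂μ := by
        congr with ω
        simp only [sq, Finset.sum_mul, Finset.mul_sum]
        exact Finset.sum_comm.trans (by congr! 2; ring)
    _ = ∑ j, c j * ∑ i, c i * ∫ ω, X i ω * X j ω ∂μ := by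
        rw [integral_finsetSum _ fun j _ ↦ integrable_finsetSum _ fun i _ ↦ hint i j]
        simp only [integral_finsetSum _ fun i _ ↦ hint i _, integral_const_mul,
          Finset.mul_sum]
    _ = 0 := by simp [horth]

lemma ae_eq_zero_of_integral_sq_eq_zero {f : Ω → ℝ} (hf : MemLp f 2 μ)
    (h : ∫ ω, f ω ^ 2 ∂μ = 0) : ∀ᵐ ω ∂μ, f ω = 0 := by
  filter_upwards [(integral_eq_zero_iff_of_nonneg (fun ω ↦ sq_nonneg (f ω))
    hf.integrable_sq).mp h] with ω hω
  exact pow_eq_zero_iff two_ne_zero |>.mp hω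

end MeasureTheory

theorem additive_kernel_implies_additive_modification_general
    {Ω : Type*} [MeasurableSpace Ω] (μ : Measure Ω)
    (Z : ℝ × ℝ → Ω → ℝ) (K1 K2 : ℝ → ℝ → ℝ)
    (hL2 : ∀ x, MemLp (Z x) 2 μ)
    (hcov : ∀ x y : ℝ × ℝ, ∫ ω, Z x ω * Z y ω ∂μ = K1 x.1 y.1 + K2 x.2 y.2) :
    ∀ x : ℝ × ℝ,
      (∫ ω, (Z x ω - (Z (x.1, 0) ω + Z (0, x.2) ω - Z (0, 0) ω)) ^ 2 ∂μ = 0) ∧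
      (∀ᵐ ω ∂μ, Z x ω = Z (x.1, 0) ω + Z (0, x.2) ω - Z (0, 0) ω) := by
  intro x
  set p : Fin 4 → ℝ × ℝ := ![x, (x.1, 0), (0, x.2), (0, 0)]
  set c : Fin 4 → ℝ := ![1, -1, -1, 1]
  have hD : ∀ ω, Z x ω - (Z (x.1, 0) ω + Z (0, x.2) ω - Z (0, 0) ω)
      = ∑ i, c i * Z (p i) ω := fun ω ↦ by
    simp only [Fin.sum_univ_four, p, c, Matrix.cons_val_zero, Matrix.cons_val_one,
      Matrix.cons_val]
    ring
  have hvar : ∫ ω, (Z x ω - (Z (x.1, 0) ω + Z (0, x.2) ω - Z (0, 0) ω)) ^ 2 ∂μ = 0 := by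
    simp_rw [hD]
    refine integral_sq_sum_eq_zero_of_forall_sum_integral_mul_eq_zero (fun i ↦ hL2 (p i)) c
      fun j ↦ ?_
    simp only [Fin.sum_univ_four, hcov, p, c, Matrix.cons_val_zero, Matrix.cons_val_one,
      Matrix.cons_val]
    ring
  refine ⟨hvar, ?_⟩
  filter_upwards [ae_eq_zero_of_integral_sq_eq_zero
    ((hL2 x).sub (((hL2 _).add (hL2 _)).sub (hL2 _))) hvar] with ω hω
  exact sub_eq_zero.mp hω

/-- A centered second-order process `Z` on `ℝ²` with additive covariance kernel
`K(x,y) = K₁(x₁,y₁) + K₂(x₂,y₂)` satisfies `Var[Z(x) − Z_T(x)] = 0` for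
`Z_T(x₁,x₂) = Z(x₁,0) + Z(0,x₂) − Z(0,0)`, hence `P(Z(x) = Z_T(x)) = 1`:
`Z` admits a modification with additive paths. -/
theorem additive_kernel_implies_additive_modification
    {Ω : Type*} [MeasurableSpace Ω] (μ : Measure Ω) [IsProbabilityMeasure μ]
    (Z : ℝ × ℝ → Ω → ℝ) (K1 K2 : ℝ → ℝ → ℝ)
    (hL2 : ∀ x, MemLp (Z x) 2 μ)
    (hcent : ∀ x, ∫ ω, Z x ω ∂μ = 0)
    (hcov : ∀ x y : ℝ × ℝ, ∫ ω, Z x ω * Z y ω ∂μ = K1 x.1 y.1 + K2 x.2 y.2) :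
    ∀ x : ℝ × ℝ,
      (∫ ω, (Z x ω - (Z (x.1, 0) ω + Z (0, x.2) ω - Z (0, 0) ω)) ^ 2 ∂μ = 0) ∧
      (∀ᵐ ω ∂μ, Z x ω = Z (x.1, 0) ω + Z (0, x.2) ω - Z (0, 0) ω) :=
  additive_kernel_implies_additive_modification_general μ Z K1 K2 hL2 hcov
end

section
/- Let Z be a centered process on ℝ² with additive kernel, and let x⁽¹⁾=(a,c), x⁽²⁾=(b,c), x⁽³⁾=(a,d), x⁽⁴⁾=(b,d). Then Var[Z(x⁽⁴⁾) − Z(x⁽²⁾) − Z(x⁽³⁾) + Z(x⁽¹⁾)] = 0, i.e., Z(x⁽⁴⁾) = Z(x⁽²⁾) + Z(x⁽³⁾) − Z(x⁽¹⁾) almost surely. -/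
/-!
The rectangle increment `W = Z(b,d) - Z(b,c) - Z(a,d) + Z(a,c)` annihilates every function of
the form `g x₁ + h x₂`, in particular the additive kernel `x ↦ K(x, y)`. Hence `W` is orthogonal
in `L²` to every `Z y`, and so to itself: `E[W²] = 0`, i.e. `W = 0` almost surely.
-/

open MeasureTheory

section RectIncrement

variable {α β G : Type*}

def rectIncrement [AddCommGroup G] (f : α × β → G) (a b : α) (c d : β) : G :=
  f (b, d) - f (b, c) - f (a, d) + f (a, c)

theorem rectIncrement_add_eq_zero [AddCommGroup G] (g : α → G) (h : β → G) (a b : α) (c d : β) :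
    rectIncrement (fun x => g x.1 + h x.2) a b c d = 0 := by
  simp only [rectIncrement]
  abel

theorem mul_rectIncrement [Ring G] (r : G) (f : α × β → G) (a b : α) (c d : β) :
    r * rectIncrement f a b c d = rectIncrement (fun x => r * f x) a b c d := by
  simp only [rectIncrement, mul_add, mul_sub]

theorem integral_rectIncrement {Ω E : Type*} [MeasurableSpace Ω] {μ : Measure Ω}
    [NormedAddCommGroup E] [NormedSpace ℝ E] {F : α × β → Ω → E}
    (hF : ∀ x, Integrable (F x) μ) (a b : α) (c d : β) :
    ∫ ω, rectIncrement (fun x => F x ω) a b c d ∂μ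
      = rectIncrement (fun x => ∫ ω, F x ω ∂μ) a b c d := by
  simp only [rectIncrement]
  rw [integral_add (f := fun ω => F (b, d) ω - F (b, c) ω - F (a, d) ω)
      (((hF _).sub (hF _)).sub (hF _)) (hF _),
    integral_sub (f := fun ω => F (b, d) ω - F (b, c) ω) ((hF _).sub (hF _)) (hF _),
    integral_sub (hF _) (hF _)]

end RectIncrement

section AdditiveSecondMoments

variable {Ω : Type*} [MeasurableSpace Ω] {μ : Measure Ω} {Z : ℝ × ℝ → Ω → ℝ}
  {K1 K2 : ℝ → ℝ → ℝ}

theorem integral_rectIncrement_mul_eq_zero (hL2 : ∀ x, MemLp (Z x) 2 μ)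
    (hcov : ∀ x y : ℝ × ℝ, ∫ ω, Z x ω * Z y ω ∂μ = K1 x.1 y.1 + K2 x.2 y.2)
    (a b c d : ℝ) (y : ℝ × ℝ) :
    ∫ ω, rectIncrement (fun x => Z x ω) a b c d * Z y ω ∂μ = 0 := by
  have hmul (x : ℝ × ℝ) : Integrable (fun ω => Z x ω * Z y ω) μ := (hL2 x).integrable_mul (hL2 y)
  calc ∫ ω, rectIncrement (fun x => Z x ω) a b c d * Z y ω ∂μ
      = ∫ ω, rectIncrement (fun x => Z x ω * Z y ω) a b c d ∂μ := by
        congr 1 with ω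
        simp only [rectIncrement]
        ring
    _ = rectIncrement (fun x => K1 x.1 y.1 + K2 x.2 y.2) a b c d := by
        simp only [integral_rectIncrement hmul, hcov]
    _ = 0 := rectIncrement_add_eq_zero (fun s => K1 s y.1) (fun t => K2 t y.2) a b c d

theorem rectIncrement_ae_eq_zero (hL2 : ∀ x, MemLp (Z x) 2 μ)
    (hcov : ∀ x y : ℝ × ℝ, ∫ ω, Z x ω * Z y ω ∂μ = K1 x.1 y.1 + K2 x.2 y.2)
    (a b c d : ℝ) :
    (fun ω => rectIncrement (fun x => Z x ω) a b c d) =ᵐ[μ] 0 := by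
  set W := fun ω => rectIncrement (fun x => Z x ω) a b c d
  have hW : MemLp W 2 μ := (((hL2 _).sub (hL2 _)).sub (hL2 _)).add (hL2 _)
  have hmul (x : ℝ × ℝ) : Integrable (fun ω => W ω * Z x ω) μ := hW.integrable_mul (hL2 x)
  have hsq : ∫ ω, W ω ^ 2 ∂μ = 0 :=
    calc ∫ ω, W ω ^ 2 ∂μ = ∫ ω, rectIncrement (fun x => W ω * Z x ω) a b c d ∂μ := by
          simp only [sq, W, mul_rectIncrement]
      _ = 0 := by
          rw [integral_rectIncrement hmul]
          simp only [W, integral_rectIncrement_mul_eq_zero hL2 hcov]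
          simp only [rectIncrement, sub_self, add_zero]
  have hsq_ae : (fun ω => W ω ^ 2) =ᵐ[μ] 0 :=
    (integral_eq_zero_iff_of_nonneg (fun ω => sq_nonneg (W ω)) hW.integrable_sq).mp hsq
  filter_upwards [hsq_ae] with ω hω
  exact pow_eq_zero_iff two_ne_zero |>.mp hω

end AdditiveSecondMoments

theorem additive_process_rectangle_relation_general
    {Ω : Type*} [MeasurableSpace Ω] (μ : Measure Ω)
    (Z : ℝ × ℝ → Ω → ℝ) (K1 K2 : ℝ → ℝ → ℝ)
    (hL2 : ∀ x, MemLp (Z x) 2 μ)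
    (hcov : ∀ x y : ℝ × ℝ, ∫ ω, Z x ω * Z y ω ∂μ = K1 x.1 y.1 + K2 x.2 y.2)
    (a b c d : ℝ) :
    ProbabilityTheory.variance
        (fun ω => Z (b, d) ω - Z (b, c) ω - Z (a, d) ω + Z (a, c) ω) μ = 0 ∧
    (∀ᵐ ω ∂μ, Z (b, d) ω = Z (b, c) ω + Z (a, d) ω - Z (a, c) ω) := by
  have hW := rectIncrement_ae_eq_zero hL2 hcov a b c d
  refine ⟨?_, ?_⟩
  · exact (ProbabilityTheory.variance_congr hW).trans (ProbabilityTheory.variance_zero μ)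
  · filter_upwards [hW] with ω hω
    simp only [rectIncrement, Pi.zero_apply] at hω
    linarith

/-- For a centered process `Z` on `ℝ²` with additive kernel and rectangle points
`x⁽¹⁾=(a,c), x⁽²⁾=(b,c), x⁽³⁾=(a,d), x⁽⁴⁾=(b,d)`, the variance of
`Z(x⁽⁴⁾) − Z(x⁽²⁾) − Z(x⁽³⁾) + Z(x⁽¹⁾)` is zero, i.e.
`Z(x⁽⁴⁾) = Z(x⁽²⁾) + Z(x⁽³⁾) − Z(x⁽¹⁾)` almost surely. -/
theorem additive_process_rectangle_relation
    {Ω : Type*} [MeasurableSpace Ω] (μ : Measure Ω) [IsProbabilityMeasure μ]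
    (Z : ℝ × ℝ → Ω → ℝ) (K1 K2 : ℝ → ℝ → ℝ)
    (h1sym : ∀ s t, K1 s t = K1 t s) (h2sym : ∀ s t, K2 s t = K2 t s)
    (hL2 : ∀ x, MemLp (Z x) 2 μ)
    (hcent : ∀ x, ∫ ω, Z x ω ∂μ = 0)
    (hcov : ∀ x y : ℝ × ℝ, ∫ ω, Z x ω * Z y ω ∂μ = K1 x.1 y.1 + K2 x.2 y.2)
    (a b c d : ℝ) :
    ProbabilityTheory.variance
        (fun ω => Z (b, d) ω - Z (b, c) ω - Z (a, d) ω + Z (a, c) ω) μ = 0 ∧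
    (∀ᵐ ω ∂μ, Z (b, d) ω = Z (b, c) ω + Z (a, d) ω - Z (a, c) ω) :=
  additive_process_rectangle_relation_general μ Z K1 K2 hL2 hcov a b c d
end

section
/- Let K(x,y) = K₁(x₁,y₁) + K₂(x₂,y₂) be an additive kernel on ℝ², let X = {x⁽¹⁾=(a,c), x⁽²⁾=(b,c), x⁽³⁾=(a,d)} be a design with invertible Gram matrix 𝐊, and let x⁽⁴⁾=(b,d). Then the simple Kriging prediction variance v(x⁽⁴⁾) = K(x⁽⁴⁾,x⁽⁴⁾) − k(x⁽⁴⁾)ᵀ 𝐊⁻¹ k(x⁽⁴⁾) equals 0, even though x⁽⁴⁾ ∉ X. -/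
/-!
An additive kernel `K = K₁ ⊕ K₂` satisfies the rectangle relation
`K((b,d), ·) = K((b,c), ·) + K((a,d), ·) − K((a,c), ·)`, and likewise in its second argument.
Hence `k(x⁽⁴⁾) = wᵀ𝐊` for `w = (−1, 1, 1)`, so `k(x⁽⁴⁾)ᵀ𝐊⁻¹k(x⁽⁴⁾) = w ⬝ k(x⁽⁴⁾)`, which by the
relation in the second argument is `K(x⁽⁴⁾, x⁽⁴⁾)`.
-/

open Matrix

theorem rectangle_eq_of_additive {α β G : Type*} [AddCommGroup G] (f : α × β → G)
    (f₁ : α → G) (f₂ : β → G) (hf : ∀ p, f p = f₁ p.1 + f₂ p.2) (a b : α) (c d : β) :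
    f (b, d) = f (b, c) + f (a, d) - f (a, c) := by
  simp only [hf]
  abel

section Kriging

variable {α ι R : Type*} [Fintype ι] [DecidableEq ι] [CommRing R]

def kernelMatrix (K : α → α → R) (X : ι → α) : Matrix ι ι R :=
  of fun i j => K (X i) (X j)

noncomputable def krigingVariance (K : α → α → R) (X : ι → α) (x : α) : R :=
  K x x - (fun i => K x (X i)) ⬝ᵥ ((kernelMatrix K X)⁻¹ *ᵥ fun i => K x (X i))

theorem dotProduct_nonsing_inv_mulVec_of_eq_vecMul {A : Matrix ι ι R} (hA : IsUnit A.det)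
    {v w : ι → R} (hv : v = w ᵥ* A) : v ⬝ᵥ (A⁻¹ *ᵥ v) = w ⬝ᵥ v := by
  rw [hv, ← dotProduct_mulVec, mulVec_mulVec, mul_nonsing_inv _ hA, one_mulVec]

theorem krigingVariance_eq_zero_of_eq_vecMul {K : α → α → R} {X : ι → α} {x : α}
    (hX : IsUnit (kernelMatrix K X).det) (w : ι → R)
    (hleft : (fun i => K x (X i)) = w ᵥ* kernelMatrix K X)
    (hright : K x x = w ⬝ᵥ fun i => K x (X i)) :
    krigingVariance K X x = 0 := by
  rw [krigingVariance, dotProduct_nonsing_inv_mulVec_of_eq_vecMul hX hleft, hright, sub_self]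

end Kriging

theorem additive_kriging_zero_variance_off_design_general
    (K1 K2 : ℝ → ℝ → ℝ)
    (a b c d : ℝ)
    (X : Fin 3 → ℝ × ℝ) (hX : X = ![(a, c), (b, c), (a, d)])
    (K : ℝ × ℝ → ℝ × ℝ → ℝ) (hK : ∀ x y, K x y = K1 x.1 y.1 + K2 x.2 y.2)
    (Kmat : Matrix (Fin 3) (Fin 3) ℝ) (hKmat : Kmat = Matrix.of fun i j => K (X i) (X j))
    (hinv : IsUnit Kmat.det) :
    K (b, d) (b, d) - (fun i => K (b, d) (X i)) ⬝ᵥ (Kmat⁻¹ *ᵥ fun i => K (b, d) (X i)) = 0 := by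
  subst hX hKmat
  have rect_left (y : ℝ × ℝ) := rectangle_eq_of_additive (fun p => K p y)
    (fun s => K1 s y.1) (fun t => K2 t y.2) (fun p => hK p y) a b c d
  have rect_right := rectangle_eq_of_additive (K (b, d))
    (K1 b) (K2 d) (hK (b, d)) a b c d
  refine krigingVariance_eq_zero_of_eq_vecMul hinv ![-1, 1, 1] ?_ ?_
  · funext i
    simp only [vecMul, dotProduct, kernelMatrix, Fin.sum_univ_three, of_apply, cons_val, rect_left]
    ring
  · simp only [dotProduct, Fin.sum_univ_three, cons_val, rect_right]
    ring

/-- For an additive kernel `K(x,y) = K₁(x₁,y₁) + K₂(x₂,y₂)` on `ℝ²`, design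
`X = {(a,c), (b,c), (a,d)}` with invertible Gram matrix `𝐊`, and `x⁽⁴⁾ = (b,d)`,
the simple Kriging prediction variance
`v(x⁽⁴⁾) = K(x⁽⁴⁾,x⁽⁴⁾) − k(x⁽⁴⁾)ᵀ 𝐊⁻¹ k(x⁽⁴⁾)` is zero, although `x⁽⁴⁾ ∉ X`. -/
theorem additive_kriging_zero_variance_off_design
    (K1 K2 : ℝ → ℝ → ℝ)
    (h1sym : ∀ s t, K1 s t = K1 t s) (h2sym : ∀ s t, K2 s t = K2 t s)
    (a b c d : ℝ)
    (X : Fin 3 → ℝ × ℝ) (hX : X = ![(a, c), (b, c), (a, d)])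
    (K : ℝ × ℝ → ℝ × ℝ → ℝ) (hK : ∀ x y, K x y = K1 x.1 y.1 + K2 x.2 y.2)
    (Kmat : Matrix (Fin 3) (Fin 3) ℝ) (hKmat : Kmat = Matrix.of fun i j => K (X i) (X j))
    (hinv : IsUnit Kmat.det) :
    K (b, d) (b, d) - (fun i => K (b, d) (X i)) ⬝ᵥ (Kmat⁻¹ *ᵥ fun i => K (b, d) (X i)) = 0 :=
  additive_kriging_zero_variance_off_design_general K1 K2 a b c d X hX K hK Kmat hKmat hinv
end
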